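/- arXiv:math/0206084 — 2 statements merged into one kernel-verified Lean document; each statement's English description precedes it below -/
import Mathlib

section
/- Let λ = (λ_1 ≥ λ_2 ≥ … ≥ λ_m ≥ 1) be a partition of N, let D be an N-dimensional complex vector space with basis e_{k,i} (1 ≤ i ≤ m, 1 ≤ k ≤ λ_i), and let x ∈ End(D) be the operator with x·e_{k,i} = e_{k−1,i} (e_{0,i} = 0). Let S_x ⊆ End(D) be the linear subspace of all f whose matrix entries f^{l,j}_{k,i} (the component of f mapping ℂe_{l,j} to ℂe_{k,i}) vanish whenever k ≠ λ_i, and also whenever k = λ_i and l > λ_i. Then dim_ℂ S_x = ∑_{i=1}^{m} ∑_{j=1}^{m} min(λ_i, λ_j), and End(D) decomposes as the direct sum End(D) = {x∘y − y∘x : y ∈ End(D)} ⊕ S_x of ℂ-linear subspaces. (Thus the affine subspace T_x = x + S_x is a transverse slice to the adjoint orbit of x in End(D).) -/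
/-!
For `1 ≤ l ≤ min λ_i λ_j` consider the diagonal sums
`Φ_{i,j,l}(f) = ∑_{s=1}^{l} f^{s,j}_{λ_i-l+s,i}`. They telescope on every commutator `x∘y - y∘x`,
and on `S_x` only the term `s = l` survives, so `Φ` restricts to an isomorphism from `S_x` onto the
space of all families indexed by the triples `(i, j, l)`. On the other hand an endomorphism
commuting with `x` is determined by the images of the top vectors `e_{λ_j,j}`, and these are
determined by their coordinates of index `l ≤ min λ_i λ_j` (the others are killed by `x^{λ_j}`),
so the centralizer of `x` has at most that many dimensions. By rank–nullity the commutator space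
is then all of `ker Φ`, which is a complement of `S_x`.
-/

open Module

theorem LinearMap.isCompl_range_of_bijective_comp_subtype {K V W : Type*} [Field K]
    [AddCommGroup V] [Module K V] [FiniteDimensional K V] [AddCommGroup W] [Module K W]
    {ad : V →ₗ[K] V} {Φ : V →ₗ[K] W} {S : Submodule K V} (hΦ : Φ ∘ₗ ad = 0)
    (hS : Function.Bijective (Φ ∘ₗ S.subtype)) (hker : finrank K (ker ad) ≤ finrank K W) :
    IsCompl (range ad) S := by
  let e := LinearEquiv.ofBijective _ hS
  have hcompl : IsCompl S (ker Φ) := by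
    have := LinearMap.isCompl_of_proj (f := e.symm.toLinearMap ∘ₗ Φ) fun s =>
      e.symm_apply_eq.mpr rfl
    rwa [LinearEquiv.ker_comp] at this
  have hrange : range ad = ker Φ := by
    refine Submodule.eq_of_le_of_finrank_le (range_le_ker_iff.mpr hΦ) ?_
    have hsurj : range Φ = ⊤ := range_eq_top.mpr (hS.2.of_comp (g := S.subtype))
    have h₁ := finrank_range_add_finrank_ker Φ
    have h₂ := finrank_range_add_finrank_ker ad
    rw [hsurj, finrank_top] at h₁
    omega
  exact hrange ▸ hcompl.symm

namespace NilpotentSlice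

variable {K : Type*} [Field K] {m : ℕ} {lam : Fin m → ℕ} {D : Type*} [AddCommGroup D]
  [Module K D] (b : Basis (Σ i : Fin m, Fin (lam i)) K D)

-- Indices are 0-based naturals, and out-of-range indices give the zero functional and the zero
-- vector; this removes all side conditions from the shift identities below.
noncomputable def coord (i : Fin m) (k : ℕ) : D →ₗ[K] K :=
  if h : k < lam i then b.coord ⟨i, ⟨k, h⟩⟩ else 0

noncomputable def vec (j : Fin m) (l : ℕ) : D :=
  if h : l < lam j then b ⟨j, ⟨l, h⟩⟩ else 0

theorem coord_fin (i : Fin m) (k : Fin (lam i)) (v : D) : coord b i k v = b.repr v ⟨i, k⟩ := by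
  simp [coord]

theorem vec_fin (j : Fin m) (l : Fin (lam j)) : vec b j l = b ⟨j, l⟩ := by
  simp [vec]

theorem coord_of_le {i : Fin m} {k : ℕ} (hk : lam i ≤ k) : coord b i k = 0 := by
  simp [coord, hk.not_gt]

theorem sigma_mk_eq_iff {j i : Fin m} {l k : ℕ} (hl : l < lam j) (hk : k < lam i) :
    (⟨j, ⟨l, hl⟩⟩ : Σ i : Fin m, Fin (lam i)) = ⟨i, ⟨k, hk⟩⟩ ↔ j = i ∧ l = k := by
  constructor
  · rintro ⟨⟩
    exact ⟨rfl, rfl⟩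
  · rintro ⟨rfl, rfl⟩
    rfl

theorem coord_vec (i : Fin m) (k : ℕ) (j : Fin m) (l : ℕ) :
    coord b i k (vec b j l) = if j = i ∧ l = k ∧ k < lam i then 1 else 0 := by
  classical
  unfold coord vec
  split_ifs with hk hl h h <;> simp only [Basis.coord_apply, Basis.repr_self,
    Finsupp.single_apply, sigma_mk_eq_iff, LinearMap.zero_apply, map_zero]
  · exact if_pos ⟨h.1, h.2.1⟩
  · exact if_neg fun h' => h ⟨h'.1, h'.2, hk⟩
  all_goals obtain ⟨rfl, rfl, _⟩ := ‹_ ∧ _ ∧ _›; omega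

theorem eq_zero_of_coord {v : D} (h : ∀ i k, k < lam i → coord b i k v = 0) : v = 0 := by
  refine b.repr.map_eq_zero_iff.mp (Finsupp.ext fun ⟨i, k⟩ => ?_)
  rw [← coord_fin]
  exact h i k k.isLt

noncomputable def shift : Module.End K D :=
  b.constr K fun s => if (s.2 : ℕ) = 0 then 0 else vec b s.1 (s.2 - 1)

theorem shift_basis (s : Σ i : Fin m, Fin (lam i)) :
    shift b (b s) = if (s.2 : ℕ) = 0 then 0 else vec b s.1 (s.2 - 1) :=
  b.constr_basis K _ s

theorem shift_vec_zero (j : Fin m) : shift b (vec b j 0) = 0 := by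
  unfold vec
  split_ifs with h
  · rw [shift_basis, if_pos rfl]
  · exact map_zero _

theorem shift_vec_succ (j : Fin m) (l : ℕ) :
    shift b (vec b j (l + 1)) = if l + 1 < lam j then vec b j l else 0 := by
  unfold vec
  split_ifs with h h'
  · rw [shift_basis, if_neg l.succ_ne_zero, Nat.add_sub_cancel]
    exact vec_fin b j ⟨l, h'⟩
  · omega
  · exact map_zero _

theorem coord_shift (i : Fin m) (k : ℕ) (v : D) :
    coord b i k (shift b v) = coord b i (k + 1) v := by
  suffices (coord b i k) ∘ₗ shift b = coord b i (k + 1) from LinearMap.congr_fun this v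
  refine b.ext fun ⟨j, ⟨l, hl⟩⟩ => ?_
  rw [LinearMap.comp_apply, ← vec_fin, Fin.val_mk]
  cases l with
  | zero => simp [shift_vec_zero, coord_vec]
  | succ l =>
    rw [shift_vec_succ, if_pos hl, coord_vec, coord_vec]
    refine if_congr ⟨?_, ?_⟩ rfl rfl
    · rintro ⟨rfl, rfl, -⟩
      exact ⟨rfl, rfl, hl⟩
    · rintro ⟨rfl, hlk, hk⟩
      exact ⟨rfl, by omega, by omega⟩

theorem coord_shift_pow (i : Fin m) (k t : ℕ) (v : D) :
    coord b i k ((shift b ^ t) v) = coord b i (k + t) v := by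
  induction t generalizing k with
  | zero => rfl
  | succ t ih => rw [pow_succ', Module.End.mul_apply, coord_shift, ih, add_right_comm, add_assoc]

theorem shift_pow_vec (j : Fin m) (l t : ℕ) :
    (shift b ^ t) (vec b j (l + t)) = if l + t < lam j then vec b j l else 0 := by
  induction t with
  | zero =>
    rw [add_zero, pow_zero, Module.End.one_apply]
    split_ifs with h
    · rfl
    · simp [vec, h]
  | succ t ih =>
    rw [pow_succ, Module.End.mul_apply, ← add_assoc, shift_vec_succ]
    split_ifs <;> simp_all
    omega

theorem shift_pow_succ_vec (j : Fin m) (l : ℕ) : (shift b ^ (l + 1)) (vec b j l) = 0 := by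
  have := shift_pow_vec b j 0 l
  rw [zero_add] at this
  rw [pow_succ', Module.End.mul_apply, this]
  split_ifs
  · exact shift_vec_zero b j
  · exact map_zero _

noncomputable def entry (i : Fin m) (k : ℕ) (j : Fin m) (l : ℕ) : Module.End K D →ₗ[K] K :=
  coord b i k ∘ₗ LinearMap.applyₗ (vec b j l)

theorem entry_apply (i : Fin m) (k : ℕ) (j : Fin m) (l : ℕ) (f : Module.End K D) :
    entry b i k j l f = coord b i k (f (vec b j l)) := rfl

theorem entry_of_le {i : Fin m} {k : ℕ} (hk : lam i ≤ k) (j : Fin m) (l : ℕ)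
    (f : Module.End K D) : entry b i k j l f = 0 := by
  rw [entry_apply, coord_of_le b hk, LinearMap.zero_apply]

theorem entry_shift_mul (i : Fin m) (k : ℕ) (j : Fin m) (l : ℕ) (y : Module.End K D) :
    entry b i k j l (shift b * y) = entry b i (k + 1) j l y :=
  coord_shift b i k _

theorem entry_mul_shift_zero (i : Fin m) (k : ℕ) (j : Fin m) (y : Module.End K D) :
    entry b i k j 0 (y * shift b) = 0 := by
  rw [entry_apply, Module.End.mul_apply, shift_vec_zero, map_zero, map_zero]

theorem entry_mul_shift_succ (i : Fin m) (k : ℕ) {j : Fin m} {l : ℕ} (hl : l + 1 < lam j)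
    (y : Module.End K D) : entry b i k j (l + 1) (y * shift b) = entry b i k j l y := by
  rw [entry_apply, Module.End.mul_apply, shift_vec_succ, if_pos hl, entry_apply]

theorem eq_zero_of_entry {f : Module.End K D}
    (h : ∀ i k j l, k < lam i → l < lam j → entry b i k j l f = 0) : f = 0 :=
  b.ext fun ⟨j, l⟩ => by
    rw [← vec_fin, LinearMap.zero_apply]
    exact eq_zero_of_coord b fun i k hk => h i k j l hk l.isLt

noncomputable def slice : Submodule K (Module.End K D) :=
  ⨅ (i : Fin m) (k : ℕ) (j : Fin m) (l : ℕ) (_ : k + 1 ≠ lam i ∨ lam i < l + 1),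
    LinearMap.ker (entry b i k j l)

theorem mem_slice {f : Module.End K D} :
    f ∈ slice b ↔ ∀ i k j l, (k + 1 ≠ lam i ∨ lam i < l + 1) → entry b i k j l f = 0 := by
  simp [slice]

theorem mem_slice_iff_repr (f : Module.End K D) :
    f ∈ slice b ↔ ∀ (i : Fin m) (k : Fin (lam i)) (j : Fin m) (l : Fin (lam j)),
      ((k : ℕ) + 1 ≠ lam i ∨ lam i < (l : ℕ) + 1) → b.repr (f (b ⟨j, l⟩)) ⟨i, k⟩ = 0 := by
  rw [mem_slice]
  refine ⟨fun h i k j l hkl => ?_, fun h i k j l hkl => ?_⟩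
  · rw [← coord_fin, ← vec_fin]
    exact h i k j l hkl
  · rcases lt_or_ge k (lam i) with hk | hk
    · rcases lt_or_ge l (lam j) with hl | hl
      · rw [entry_apply, ← Fin.val_mk hk, ← Fin.val_mk hl, coord_fin, vec_fin]
        exact h i ⟨k, hk⟩ j ⟨l, hl⟩ hkl
      · rw [entry_apply, vec, dif_neg hl.not_gt, map_zero, map_zero]
    · exact entry_of_le b hk j l f

abbrev SliceIndex (lam : Fin m → ℕ) : Type := Σ i j : Fin m, Fin (min (lam i) (lam j))

theorem card_sliceIndex (lam : Fin m → ℕ) :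
    Fintype.card (SliceIndex lam) = ∑ i, ∑ j, min (lam i) (lam j) := by
  simp [Fintype.card_sigma]

theorem sliceIndex_eq_iff {p q : SliceIndex lam} :
    p = q ↔ p.1 = q.1 ∧ p.2.1 = q.2.1 ∧ (p.2.2 : ℕ) = q.2.2 := by
  obtain ⟨i, j, l⟩ := p
  obtain ⟨i', j', l'⟩ := q
  constructor
  · rintro ⟨⟩
    exact ⟨rfl, rfl, rfl⟩
  · rintro ⟨h₁, h₂, h₃⟩
    dsimp only at h₁ h₂ h₃
    subst h₁ h₂
    rw [Fin.ext h₃]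

noncomputable def diagSum : Module.End K D →ₗ[K] (SliceIndex lam → K) :=
  LinearMap.pi fun p => ∑ s ∈ Finset.range (p.2.2 + 1),
    entry b p.1 (lam p.1 - 1 - p.2.2 + s) p.2.1 s

noncomputable def topEntries : Module.End K D →ₗ[K] (SliceIndex lam → K) :=
  LinearMap.pi fun p => entry b p.1 (lam p.1 - 1) p.2.1 p.2.2

noncomputable def centralEntries : Module.End K D →ₗ[K] (SliceIndex lam → K) :=
  LinearMap.pi fun p => entry b p.1 p.2.2 p.2.1 (lam p.2.1 - 1)

theorem diagSum_shift_mul_sub_mul_shift (y : Module.End K D) :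
    diagSum b (shift b * y - y * shift b) = 0 := by
  funext ⟨i, j, l⟩
  have hl := lt_min_iff.mp l.isLt
  set a := lam i - 1 - l
  simp only [diagSum, LinearMap.pi_apply, LinearMap.sum_apply, map_sub,
    Pi.zero_apply, sub_eq_zero]
  calc ∑ s ∈ Finset.range (l + 1), entry b i (a + s) j s (shift b * y)
      = ∑ s ∈ Finset.range l, entry b i (a + (s + 1)) j s y := by
        rw [Finset.sum_range_succ, entry_shift_mul, entry_of_le b (by omega), add_zero]
        simp only [entry_shift_mul, add_assoc]
    _ = ∑ s ∈ Finset.range (l + 1), entry b i (a + s) j s (y * shift b) := by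
        rw [Finset.sum_range_succ', entry_mul_shift_zero, add_zero]
        refine Finset.sum_congr rfl fun s hs => (entry_mul_shift_succ b _ _ ?_ _).symm
        have := Finset.mem_range.mp hs
        omega

theorem diagSum_eq_topEntries {f : Module.End K D} (hf : f ∈ slice b) :
    diagSum b f = topEntries b f := by
  funext ⟨i, j, l⟩
  have hl := lt_min_iff.mp l.isLt
  simp only [diagSum, topEntries, LinearMap.pi_apply, LinearMap.sum_apply]
  rw [Finset.sum_range_succ, Finset.sum_eq_zero, zero_add]
  · rw [Nat.sub_add_cancel (by omega)]
  · intro s hs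
    have := Finset.mem_range.mp hs
    exact (mem_slice b).mp hf i _ j s (Or.inl (by omega))

theorem eq_zero_of_topEntries {f : Module.End K D} (hf : f ∈ slice b)
    (h : topEntries b f = 0) : f = 0 := by
  refine eq_zero_of_entry b fun i k j l hk hl => ?_
  by_cases htop : k + 1 = lam i ∧ l < lam i
  · obtain rfl : k = lam i - 1 := by omega
    exact congrFun h ⟨i, j, ⟨l, lt_min htop.2 hl⟩⟩
  · exact (mem_slice b).mp hf i k j l (by omega)

noncomputable def elementary (p : SliceIndex lam) : Module.End K D :=
  (coord b p.2.1 p.2.2).smulRight (vec b p.1 (lam p.1 - 1))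

theorem entry_elementary (i : Fin m) (k : ℕ) (j : Fin m) (l : ℕ) (p : SliceIndex lam) :
    entry b i k j l (elementary b p) =
      (if j = p.2.1 ∧ l = p.2.2 ∧ (p.2.2 : ℕ) < lam p.2.1 then 1 else 0) *
        (if p.1 = i ∧ lam p.1 - 1 = k ∧ k < lam i then 1 else 0) := by
  rw [entry_apply, elementary, LinearMap.smulRight_apply, map_smul, coord_vec, coord_vec,
    smul_eq_mul]

theorem elementary_mem_slice (p : SliceIndex lam) : elementary b p ∈ slice b := by
  refine (mem_slice b).mpr fun i k j l hkl => ?_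
  have hp := lt_min_iff.mp p.2.2.isLt
  rw [entry_elementary]
  split_ifs with h₁ h₂
  · obtain ⟨rfl, rfl, -⟩ := h₁
    obtain ⟨rfl, rfl, -⟩ := h₂
    omega
  all_goals simp

theorem topEntries_elementary (p q : SliceIndex lam) :
    topEntries b (elementary b p) q = if q = p then 1 else 0 := by
  have hp := lt_min_iff.mp p.2.2.isLt
  have hq := lt_min_iff.mp q.2.2.isLt
  rw [topEntries, LinearMap.pi_apply, entry_elementary, ite_zero_mul_ite_zero, mul_one]
  refine if_congr (Iff.trans ⟨?_, ?_⟩ sliceIndex_eq_iff.symm) rfl rfl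
  · rintro ⟨⟨hj, hl, -⟩, hi, -⟩
    exact ⟨hi.symm, hj, hl⟩
  · rintro ⟨hi, hj, hl⟩
    exact ⟨⟨hj, hl, hp.2⟩, hi.symm, by rw [hi], by omega⟩

theorem exists_mem_slice_topEntries_eq (c : SliceIndex lam → K) :
    ∃ f ∈ slice b, topEntries b f = c := by
  classical
  refine ⟨∑ p, c p • elementary b p,
    Submodule.sum_mem _ fun p _ => Submodule.smul_mem _ _ (elementary_mem_slice b p), ?_⟩
  funext q
  simp [topEntries_elementary]

theorem bijective_diagSum_comp_subtype :
    Function.Bijective (diagSum b ∘ₗ (slice b).subtype) := by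
  refine ⟨(injective_iff_map_eq_zero _).mpr fun f hf => ?_, fun c => ?_⟩
  · rw [LinearMap.comp_apply, Submodule.subtype_apply, diagSum_eq_topEntries b f.2] at hf
    exact Subtype.ext (eq_zero_of_topEntries b f.2 hf)
  · obtain ⟨f, hf, rfl⟩ := exists_mem_slice_topEntries_eq b c
    exact ⟨⟨f, hf⟩, diagSum_eq_topEntries b hf⟩

theorem eq_zero_of_commute_shift {y : Module.End K D} (hc : Commute (shift b) y)
    (h : centralEntries b y = 0) : y = 0 := by
  have hvec : ∀ j l, l < lam j → y (vec b j l) = 0 := by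
    intro j l hl
    obtain ⟨n, hn⟩ : ∃ n, lam j = n + 1 := ⟨lam j - 1, by omega⟩
    have htop : y (vec b j n) = 0 := by
      refine eq_zero_of_coord b fun i k hk => ?_
      rcases lt_or_ge k (lam j) with hkj | hkj
      · have : entry b i k j (lam j - 1) y = 0 := congrFun h ⟨i, j, ⟨k, lt_min hk hkj⟩⟩
        rwa [hn, Nat.add_sub_cancel] at this
      · -- `coord (d + λ_j) = coord d ∘ shift ^ λ_j`, and `shift ^ λ_j` kills the top vector
        obtain ⟨d, rfl⟩ : ∃ d, k = d + (n + 1) := ⟨k - (n + 1), by omega⟩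
        rw [← coord_shift_pow, ← Module.End.mul_apply, (hc.pow_left _).eq, Module.End.mul_apply,
          shift_pow_succ_vec, map_zero, map_zero]
    have hdown := shift_pow_vec b j l (n - l)
    rw [Nat.add_sub_cancel' (by omega), if_pos (by omega)] at hdown
    rw [← hdown, ← Module.End.mul_apply, ← (hc.pow_left _).eq, Module.End.mul_apply, htop,
      map_zero]
  exact b.ext fun ⟨j, l⟩ => by rw [← vec_fin, LinearMap.zero_apply]; exact hvec j l l.isLt

theorem finrank_ker_commutator_le [FiniteDimensional K D] :
    finrank K (LinearMap.ker (LinearMap.mulLeft K (shift b) - LinearMap.mulRight K (shift b))) ≤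
      Fintype.card (SliceIndex lam) := by
  rw [← finrank_fintype_fun_eq_card K]
  refine LinearMap.finrank_le_finrank_of_injective (f := centralEntries b ∘ₗ Submodule.subtype _)
    ((injective_iff_map_eq_zero _).mpr fun ⟨y, hy⟩ h => Subtype.ext ?_)
  rw [LinearMap.mem_ker, LinearMap.sub_apply, LinearMap.mulLeft_apply, LinearMap.mulRight_apply,
    sub_eq_zero] at hy
  exact eq_zero_of_commute_shift b hy h

end NilpotentSlice

open NilpotentSlice

theorem stmt6_general (m : ℕ) (lam : Fin m → ℕ)
    (D : Type) [AddCommGroup D] [Module ℂ D]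
    (b : Basis (Σ i : Fin m, Fin (lam i)) ℂ D)
    (x : Module.End ℂ D)
    (hx : ∀ (i : Fin m) (k : Fin (lam i)),
      x (b ⟨i, k⟩) =
        if h : (k : ℕ) = 0 then 0
        else b ⟨i, ⟨(k : ℕ) - 1, lt_of_le_of_lt (Nat.sub_le _ _) k.isLt⟩⟩)
    (S : Submodule ℂ (Module.End ℂ D))
    (hS : ∀ f : Module.End ℂ D, f ∈ S ↔
      ∀ (i : Fin m) (k : Fin (lam i)) (j : Fin m) (l : Fin (lam j)),
        ((k : ℕ) + 1 ≠ lam i ∨ lam i < (l : ℕ) + 1) →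
          b.repr (f (b ⟨j, l⟩)) ⟨i, k⟩ = 0) :
    Module.finrank ℂ S = (∑ i : Fin m, ∑ j : Fin m, min (lam i) (lam j)) ∧
    IsCompl (LinearMap.range (LinearMap.mulLeft ℂ x - LinearMap.mulRight ℂ x)) S := by
  have : Module.Finite ℂ D := Module.Finite.of_basis b
  obtain rfl : x = shift b := b.ext fun ⟨i, k⟩ => by
    rw [hx, shift_basis]
    split_ifs
    · rfl
    · exact (vec_fin b i _).symm
  obtain rfl : S = slice b :=
    SetLike.ext fun f => (hS f).trans (mem_slice_iff_repr b f).symm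
  have hbij := bijective_diagSum_comp_subtype b
  refine ⟨?_, LinearMap.isCompl_range_of_bijective_comp_subtype ?_ hbij ?_⟩
  · rw [(LinearEquiv.ofBijective _ hbij).finrank_eq, finrank_fintype_fun_eq_card, card_sliceIndex]
  · ext y : 1
    simpa using diagSum_shift_mul_sub_mul_shift b y
  · rw [finrank_fintype_fun_eq_card]
    exact finrank_ker_commutator_le b

/-- Let `λ = (λ_1 ≥ … ≥ λ_m ≥ 1)` be a partition of `N`, `D` an
`N`-dimensional complex vector space with basis `e_{k,i}` (`1 ≤ i ≤ m`,
`1 ≤ k ≤ λ_i`, with `k` encoded as an element of `Fin (λ i)` representing `k+1`),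
and `x` the operator with `x e_{k,i} = e_{k-1,i}` (`e_{0,i} = 0`).  Let
`S_x ⊆ End(D)` be the subspace of all `f` whose matrix entries `f^{l,j}_{k,i}`
(the coefficient of `e_{k,i}` in `f(e_{l,j})`) vanish whenever `k ≠ λ_i`, and
whenever `k = λ_i` and `l > λ_i` (i.e. whenever `k ≠ λ_i` or `l > λ_i`).  Then
`dim_ℂ S_x = ∑_{i,j} min(λ_i, λ_j)`, and `End(D)` is the direct sum of the
commutator space `{x∘y - y∘x : y ∈ End(D)}` and `S_x`. -/
theorem stmt6 (m N : ℕ) (lam : Fin m → ℕ)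
    (hlam_mono : ∀ i j : Fin m, i ≤ j → lam j ≤ lam i)
    (hlam_pos : ∀ i, 1 ≤ lam i)
    (hN : ∑ i, lam i = N)
    (D : Type) [AddCommGroup D] [Module ℂ D]
    (b : Basis (Σ i : Fin m, Fin (lam i)) ℂ D)
    (x : Module.End ℂ D)
    (hx : ∀ (i : Fin m) (k : Fin (lam i)),
      x (b ⟨i, k⟩) =
        if h : (k : ℕ) = 0 then 0
        else b ⟨i, ⟨(k : ℕ) - 1, lt_of_le_of_lt (Nat.sub_le _ _) k.isLt⟩⟩)
    (S : Submodule ℂ (Module.End ℂ D))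
    (hS : ∀ f : Module.End ℂ D, f ∈ S ↔
      ∀ (i : Fin m) (k : Fin (lam i)) (j : Fin m) (l : Fin (lam j)),
        ((k : ℕ) + 1 ≠ lam i ∨ lam i < (l : ℕ) + 1) →
          b.repr (f (b ⟨j, l⟩)) ⟨i, k⟩ = 0) :
    Module.finrank ℂ S = (∑ i : Fin m, ∑ j : Fin m, min (lam i) (lam j)) ∧
    IsCompl (LinearMap.range (LinearMap.mulLeft ℂ x - LinearMap.mulRight ℂ x)) S :=
  stmt6_general m lam D b x hx S hS
end

section
/- Let n ≥ 2 and v, d ∈ ℤ_{≥0}^{n−1}. Let V_1,…,V_{n−1} and D_1,…,D_{n−1} be complex vector spaces with dim V_i = v_i and dim D_i = d_i, and set V_0 = V_n = 0. Let B_i : V_i → V_{i+1} and B̄_i : V_{i+1} → V_i (for 1 ≤ i ≤ n−2, with B_0, B̄_0, B_{n−1}, B̄_{n−1} understood as zero maps), p_i : D_i → V_i and q_i : V_i → D_i be linear maps satisfying the moment map equations B_{i−1}∘B̄_{i−1} − B̄_i∘B_i + p_i∘q_i = 0 in End(V_i) for every 1 ≤ i ≤ n−1. Let D = ⊕_{1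 ≤ h ≤ j ≤ n−1} D_j^h, where each D_j^h is a copy of D_j. Let x ∈ End(D) be the operator mapping D_j^h identically onto D_j^{h−1} for h ≥ 2 and killing each D_j^1. Let f ∈ End(D) be the operator whose block f^{j',h'}_{j,h} : D_{j'}^{h'} → D_j^h equals q_j∘B_{j−1}∘B_{j−2}∘⋯∘B_{h'}∘B̄_{h'}∘B̄_{h'+1}∘⋯∘B̄_{j'−1}∘p_{j'} : D_{j'} → D_j whenever h = j and h' ≤ j (where the chain B_{j−1}⋯B_{h'} is absent if h' = j and the chain B̄_{h'}⋯B̄_{j'−1} is absent if h' = j'), and equals 0 in all other cases. Then the operator x + f ∈ End(D) is nilpotent. -/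
/-!
Over `ℂ` it suffices to show that `x + f` has no nonzero eigenvalue. Let `(x + f) e = μ e` with
`μ ≠ 0` and write `w_{j,h}` for the blocks of `e`. The shift `x` gives `μ w_{j,h} = w_{j,h+1}`
for `h < j`, and `f` gives `μ w_{j,j} = q_j y_j`, where
`u_a = ∑_{j ≥ a} B̄_a ⋯ B̄_{j-1} p_j w_{j,a}` and `y_a = ∑_{h ≤ a} B_{a-1} ⋯ B_h u_h`
(`downSum`, `upSum`). Together with the moment map equations these give
`μ y_a = B̄_a y_{a+1}`; as `V_n = 0`, downward induction yields `y = 0`, hence `w_{j,j} = 0`,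
and then every `w_{j,h} = 0`.
-/

open Module

/-- The composite `B_{a+k-1} ∘ ⋯ ∘ B_{a+1} ∘ B_a : V_a → V_{a+k}` of the forward
quiver maps (the identity when `k = 0`). -/
noncomputable def upChain {V : ℕ → Type} [∀ i, AddCommGroup (V i)]
    [∀ i, Module ℂ (V i)] (B : ∀ i, V i →ₗ[ℂ] V (i + 1)) (a : ℕ) :
    (k : ℕ) → (V a →ₗ[ℂ] V (a + k))
  | 0 => LinearMap.id
  | k + 1 => B (a + k) ∘ₗ upChain B a k

/-- The composite `B̄_a ∘ B̄_{a+1} ∘ ⋯ ∘ B̄_{a+k-1} : V_{a+k} → V_a` of the backward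
quiver maps (the identity when `k = 0`). -/
noncomputable def downChain {V : ℕ → Type} [∀ i, AddCommGroup (V i)]
    [∀ i, Module ℂ (V i)] (Bb : ∀ i, V (i + 1) →ₗ[ℂ] V i) (a : ℕ) :
    (k : ℕ) → (V (a + k) →ₗ[ℂ] V a)
  | 0 => LinearMap.id
  | k + 1 => downChain Bb a k ∘ₗ Bb (a + k)

/-- Transport of a linear map along an equality of indices. -/
noncomputable def castL {V : ℕ → Type} [∀ i, AddCommGroup (V i)]
    [∀ i, Module ℂ (V i)] {a b : ℕ} (h : a = b) : V a →ₗ[ℂ] V b := by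
  subst h; exact LinearMap.id

/-- The block `q_j ∘ B_{j-1} ∘ ⋯ ∘ B_{h'} ∘ B̄_{h'} ∘ ⋯ ∘ B̄_{j'-1} ∘ p_{j'} :
D_{j'} → D_j` of the Mirković–Vybornov map (zero when `h' > j` or `h' > j'`;
the chain `B_{j-1}⋯B_{h'}` is absent when `h' = j`, and the chain
`B̄_{h'}⋯B̄_{j'-1}` is absent when `h' = j'`). -/
noncomputable def phiBlock {V Dsp : ℕ → Type}
    [∀ i, AddCommGroup (V i)] [∀ i, Module ℂ (V i)]
    [∀ i, AddCommGroup (Dsp i)] [∀ i, Module ℂ (Dsp i)]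
    (B : ∀ i, V i →ₗ[ℂ] V (i + 1)) (Bb : ∀ i, V (i + 1) →ₗ[ℂ] V i)
    (p : ∀ i, Dsp i →ₗ[ℂ] V i) (q : ∀ i, V i →ₗ[ℂ] Dsp i)
    (h' j' j : ℕ) : Dsp j' →ₗ[ℂ] Dsp j :=
  if h1 : h' ≤ j then
    if h2 : h' ≤ j' then
      q j ∘ₗ castL (V := V) (Nat.add_sub_cancel' h1) ∘ₗ upChain B h' (j - h') ∘ₗ
        downChain Bb h' (j' - h') ∘ₗ castL (V := V) (Nat.add_sub_cancel' h2).symm ∘ₗ p j'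
    else 0
  else 0

open Finset

theorem Module.Finite.of_sum_comp_eq_id {R M ι : Type*} {N : ι → Type*} [Semiring R]
    [AddCommMonoid M] [Module R M] [∀ i, AddCommMonoid (N i)] [∀ i, Module R (N i)]
    [∀ i, Module.Finite R (N i)] (s : Finset ι) (inc : ∀ i, N i →ₗ[R] M)
    (proj : ∀ i, M →ₗ[R] N i) (h : ∑ i ∈ s, inc i ∘ₗ proj i = LinearMap.id) :
    Module.Finite R M := by
  refine Module.Finite.of_surjective
    (∑ i : s, inc i ∘ₗ LinearMap.proj (R := R) (φ := fun i : s => N i) i)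
    fun m => ⟨fun i => proj i m, ?_⟩
  simpa [LinearMap.sum_apply, s.sum_attach fun i => inc i (proj i m)] using congr($h m)

theorem Module.End.isNilpotent_of_forall_hasEigenvalue_eq_zero {K V : Type*} [Field K]
    [IsAlgClosed K] [AddCommGroup V] [Module K V] [FiniteDimensional K V] (φ : End K V)
    (h : ∀ μ, φ.HasEigenvalue μ → μ = 0) : IsNilpotent φ := by
  have hroots : ∀ a ∈ (minpoly K φ).roots, Polynomial.X - Polynomial.C a = Polynomial.X :=
    fun a ha => by
      rw [h a (hasEigenvalue_of_isRoot (Polynomial.isRoot_of_mem_roots ha)), map_zero, sub_zero]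
  have hX : minpoly K φ = Polynomial.X ^ (minpoly K φ).roots.card := by
    conv_lhs => rw [(IsAlgClosed.splits _).eq_prod_roots_of_monic
      (minpoly.monic (Algebra.IsIntegral.isIntegral φ))]
    rw [Multiset.map_congr rfl hroots, Multiset.map_const', Multiset.prod_replicate]
  refine ⟨(minpoly K φ).roots.card, ?_⟩
  have := minpoly.aeval K φ
  rwa [hX, map_pow, Polynomial.aeval_X] at this

section Chains

variable {V : ℕ → Type} [∀ i, AddCommGroup (V i)] [∀ i, Module ℂ (V i)]

noncomputable def upTo (B : ∀ i, V i →ₗ[ℂ] V (i + 1)) (a b : ℕ) : V a →ₗ[ℂ] V b :=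
  if h : a ≤ b then castL (Nat.add_sub_cancel' h) ∘ₗ upChain B a (b - a) else 0

noncomputable def downTo (Bb : ∀ i, V (i + 1) →ₗ[ℂ] V i) (a b : ℕ) : V b →ₗ[ℂ] V a :=
  if h : a ≤ b then downChain Bb a (b - a) ∘ₗ castL (Nat.add_sub_cancel' h).symm else 0

variable (B : ∀ i, V i →ₗ[ℂ] V (i + 1)) (Bb : ∀ i, V (i + 1) →ₗ[ℂ] V i)

theorem upTo_add (a k : ℕ) : upTo B a (a + k) = upChain B a k := by
  have key (m : ℕ) (hm : a + m = a + k) : castL hm ∘ₗ upChain B a m = upChain B a k := by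
    obtain rfl : m = k := by omega
    rfl
  rw [upTo, dif_pos (Nat.le_add_right a k)]
  exact key _ (Nat.add_sub_cancel' (Nat.le_add_right a k))

theorem downTo_add (a k : ℕ) : downTo Bb a (a + k) = downChain Bb a k := by
  have key (m : ℕ) (hm : a + m = a + k) :
      downChain Bb a m ∘ₗ castL hm.symm = downChain Bb a k := by
    obtain rfl : m = k := by omega
    rfl
  rw [downTo, dif_pos (Nat.le_add_right a k)]
  exact key _ (Nat.add_sub_cancel' (Nat.le_add_right a k))

theorem upTo_self (a : ℕ) : upTo B a a = LinearMap.id := upTo_add B a 0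

theorem downTo_self (a : ℕ) : downTo Bb a a = LinearMap.id := downTo_add Bb a 0

theorem upTo_succ {a b : ℕ} (h : a ≤ b) : upTo B a (b + 1) = B b ∘ₗ upTo B a b := by
  obtain ⟨k, rfl⟩ := Nat.exists_eq_add_of_le h
  exact (upTo_add B a (k + 1)).trans (congrArg _ (upTo_add B a k).symm)

theorem downTo_succ {a b : ℕ} (h : a ≤ b) : downTo Bb a (b + 1) = downTo Bb a b ∘ₗ Bb b := by
  obtain ⟨k, rfl⟩ := Nat.exists_eq_add_of_le h
  exact (downTo_add Bb a (k + 1)).trans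
    (congrArg (· ∘ₗ Bb (a + k)) (downTo_add Bb a k).symm)

theorem downTo_eq_comp {a b : ℕ} (h : a < b) :
    downTo Bb a b = Bb a ∘ₗ downTo Bb (a + 1) b := by
  induction b, h using Nat.le_induction with
  | base => rw [downTo_succ Bb le_rfl, downTo_self, downTo_self]; rfl
  | succ b hab ih =>
    rw [downTo_succ Bb (by omega), ih, downTo_succ Bb hab, LinearMap.comp_assoc]

end Chains

section Flows

variable {V Dsp : ℕ → Type} [∀ i, AddCommGroup (V i)] [∀ i, Module ℂ (V i)]
    [∀ i, AddCommGroup (Dsp i)] [∀ i, Module ℂ (Dsp i)] (n : ℕ)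
    (B : ∀ i, V i →ₗ[ℂ] V (i + 1)) (Bb : ∀ i, V (i + 1) →ₗ[ℂ] V i)
    (p : ∀ i, Dsp i →ₗ[ℂ] V i) (q : ∀ i, V i →ₗ[ℂ] Dsp i) (w : ∀ j, ℕ → Dsp j)

theorem phiBlock_eq {h' j' j : ℕ} (h1 : h' ≤ j) (h2 : h' ≤ j') :
    phiBlock B Bb p q h' j' j = q j ∘ₗ upTo B h' j ∘ₗ downTo Bb h' j' ∘ₗ p j' := by
  simp only [phiBlock, upTo, downTo, dif_pos h1, dif_pos h2]
  rfl

theorem phiBlock_of_lt {h' j' j : ℕ} (h : j < h') : phiBlock B Bb p q h' j' j = 0 :=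
  dif_neg (by omega)

noncomputable def downSum (a : ℕ) : V a :=
  ∑ j ∈ Icc a (n - 1), downTo Bb a j (p j (w j a))

noncomputable def upSum (a : ℕ) : V a :=
  ∑ h ∈ Icc 1 a, upTo B h a (downSum n Bb p w h)

theorem sum_phiBlock_eq_q_upSum {j : ℕ} (hj : j ≤ n - 1) :
    ∑ j' ∈ Icc 1 (n - 1), ∑ h' ∈ Icc 1 j', phiBlock B Bb p q h' j' j (w j' h') =
      q j (upSum n B Bb p w j) := by
  rw [sum_comm' (t' := Icc 1 (n - 1)) (s' := fun h' => Icc h' (n - 1))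
    (fun j' h' => by simp only [mem_Icc]; omega)]
  rw [← sum_subset (Icc_subset_Icc_right hj) fun h' _ hh' => sum_eq_zero fun j' _ => by
    rw [phiBlock_of_lt B Bb p q (by simp_all), LinearMap.zero_apply]]
  rw [upSum, map_sum]
  refine sum_congr rfl fun h' hh' => ?_
  rw [downSum, map_sum, map_sum]
  refine sum_congr rfl fun j' hj' => ?_
  rw [phiBlock_eq B Bb p q (mem_Icc.mp hh').2 (mem_Icc.mp hj').1]
  rfl

theorem upSum_succ (a : ℕ) :
    upSum n B Bb p w (a + 1) = downSum n Bb p w (a + 1) + B a (upSum n B Bb p w a) := by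
  rw [upSum, upSum, sum_Icc_succ_top (by omega), upTo_self, LinearMap.id_apply, map_sum]
  refine (add_comm _ _).trans (congrArg _ (sum_congr rfl fun h hh => ?_))
  rw [upTo_succ B (mem_Icc.mp hh).2, LinearMap.comp_apply]

variable {n p w}

theorem smul_downSum {μ : ℂ}
    (hrow : ∀ j h, 1 ≤ h → h + 1 ≤ j → j ≤ n - 1 → μ • w j h = w j (h + 1))
    {a : ℕ} (ha : 1 ≤ a) (han : a ≤ n - 1) :
    μ • downSum n Bb p w a = μ • p a (w a a) + Bb a (downSum n Bb p w (a + 1)) := by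
  rw [downSum, ← insert_Icc_add_one_left_eq_Icc han, sum_insert (by simp), downTo_self,
    smul_add, smul_sum, downSum, map_sum]
  congr 1
  refine sum_congr rfl fun j hj => ?_
  rw [mem_Icc] at hj
  rw [downTo_eq_comp Bb (by omega : a < j), LinearMap.comp_apply, ← map_smul, ← map_smul,
    ← map_smul, hrow j a ha hj.1 hj.2]

end Flows

section EigenEquations

variable {V Dsp : ℕ → Type} [∀ i, AddCommGroup (V i)] [∀ i, Module ℂ (V i)]
    [∀ i, AddCommGroup (Dsp i)] [∀ i, Module ℂ (Dsp i)] {n : ℕ}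
    {B : ∀ i, V i →ₗ[ℂ] V (i + 1)} {Bb : ∀ i, V (i + 1) →ₗ[ℂ] V i}
    {p : ∀ i, Dsp i →ₗ[ℂ] V i} {q : ∀ i, V i →ₗ[ℂ] Dsp i} {w : ∀ j, ℕ → Dsp j} {μ : ℂ}

theorem smul_upSum (hV0 : Subsingleton (V 0))
    (hmoment : ∀ i, i + 1 ≤ n - 1 →
      B i ∘ₗ Bb i - Bb (i + 1) ∘ₗ B (i + 1) + p (i + 1) ∘ₗ q (i + 1) = 0)
    (hrow : ∀ j h, 1 ≤ h → h + 1 ≤ j → j ≤ n - 1 → μ • w j h = w j (h + 1))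
    (hdiag : ∀ j, 1 ≤ j → j ≤ n - 1 → μ • w j j = q j (upSum n B Bb p w j)) :
    ∀ a ≤ n - 1, μ • upSum n B Bb p w a = Bb a (upSum n B Bb p w (a + 1)) := by
  intro a
  induction a with
  | zero => exact fun _ => Subsingleton.elim _ _
  | succ a ih =>
    intro ha
    set y := upSum n B Bb p w with hy
    have hpq := congr($(hmoment a ha) (y (a + 1)))
    simp only [LinearMap.add_apply, LinearMap.sub_apply, LinearMap.comp_apply,
      LinearMap.zero_apply] at hpq
    calc μ • y (a + 1) = μ • downSum n Bb p w (a + 1) + B a (μ • y a) := by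
          rw [hy, upSum_succ, smul_add, map_smul]
      _ = μ • p (a + 1) (w (a + 1) (a + 1)) + Bb (a + 1) (downSum n Bb p w (a + 1 + 1))
            + B a (Bb a (y (a + 1))) := by
          rw [smul_downSum Bb hrow (by omega) ha, ih (by omega)]
      _ = p (a + 1) (q (a + 1) (y (a + 1))) + Bb (a + 1) (downSum n Bb p w (a + 1 + 1))
            + B a (Bb a (y (a + 1))) := by
          rw [← map_smul, hdiag (a + 1) (by omega) ha]
      _ = Bb (a + 1) (downSum n Bb p w (a + 1 + 1) + B (a + 1) (y (a + 1))) := by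
          rw [map_add]
          linear_combination (norm := module) hpq
      _ = Bb (a + 1) (y (a + 1 + 1)) := by rw [hy, upSum_succ n B Bb p w (a + 1)]

theorem upSum_eq_zero (hVn : Subsingleton (V n)) (hμ : μ ≠ 0)
    (hsmul : ∀ a ≤ n - 1, μ • upSum n B Bb p w a = Bb a (upSum n B Bb p w (a + 1))) :
    ∀ a ≤ n, upSum n B Bb p w a = 0 := by
  intro a ha
  induction ha using Nat.decreasingInduction with
  | self => exact Subsingleton.elim _ _
  | of_succ k hk ih =>
    rw [← smul_eq_zero_iff_right hμ, hsmul k (by omega), ih, map_zero]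

theorem eq_zero_of_eigen_equations (hV0 : Subsingleton (V 0)) (hVn : Subsingleton (V n))
    (hmoment : ∀ i, i + 1 ≤ n - 1 →
      B i ∘ₗ Bb i - Bb (i + 1) ∘ₗ B (i + 1) + p (i + 1) ∘ₗ q (i + 1) = 0)
    (hμ : μ ≠ 0) (hrow : ∀ j h, 1 ≤ h → h + 1 ≤ j → j ≤ n - 1 → μ • w j h = w j (h + 1))
    (hdiag : ∀ j, 1 ≤ j → j ≤ n - 1 →
      μ • w j j = ∑ j' ∈ Icc 1 (n - 1), ∑ h' ∈ Icc 1 j', phiBlock B Bb p q h' j' j (w j' h'))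
    {j h : ℕ} (h1 : 1 ≤ h) (hhj : h ≤ j) (hj : j ≤ n - 1) : w j h = 0 := by
  have hdiag' j (hj1 : 1 ≤ j) (hjn : j ≤ n - 1) : μ • w j j = q j (upSum n B Bb p w j) :=
    (hdiag j hj1 hjn).trans (sum_phiBlock_eq_q_upSum n B Bb p q w hjn)
  have hy := upSum_eq_zero hVn hμ (smul_upSum hV0 hmoment hrow hdiag')
  induction hhj using Nat.decreasingInduction with
  | self =>
    rw [← smul_eq_zero_iff_right hμ, hdiag' j (by omega) hj, hy j (by omega), map_zero]
  | of_succ k hk ih => rw [← smul_eq_zero_iff_right hμ, hrow j k h1 hk hj, ih (by omega)]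

end EigenEquations

section Blocks

variable {n : ℕ} {Dsp : ℕ → Type} [∀ i, AddCommGroup (Dsp i)] [∀ i, Module ℂ (Dsp i)]
    {D : Type} [AddCommGroup D] [Module ℂ D]
    {ι : ∀ _j _h : ℕ, Dsp _j →ₗ[ℂ] D} {π : ∀ _j _h : ℕ, D →ₗ[ℂ] Dsp _j}

theorem eq_sum_ι_π
    (hcomplete : ∑ j ∈ Icc 1 (n - 1), ∑ h ∈ Icc 1 j, ι j h ∘ₗ π j h = LinearMap.id) (v : D) :
    v = ∑ j ∈ Icc 1 (n - 1), ∑ h ∈ Icc 1 j, ι j h (π j h v) := by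
  simpa [LinearMap.sum_apply] using congr($hcomplete.symm v)

theorem π_apply_eq_sum
    (hcomplete : ∑ j ∈ Icc 1 (n - 1), ∑ h ∈ Icc 1 j, ι j h ∘ₗ π j h = LinearMap.id)
    (T : Module.End ℂ D) (v : D) (j h : ℕ) :
    π j h (T v) = ∑ j' ∈ Icc 1 (n - 1), ∑ h' ∈ Icc 1 j', π j h (T (ι j' h' (π j' h' v))) := by
  conv_lhs => rw [eq_sum_ι_π hcomplete v]
  simp only [map_sum]

theorem π_sum_ι_diag
    (hπι : ∀ j h, 1 ≤ h → h ≤ j → j ≤ n - 1 → π j h ∘ₗ ι j h = LinearMap.id)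
    (hπι0 : ∀ j h j' h', 1 ≤ h → h ≤ j → j ≤ n - 1 → 1 ≤ h' → h' ≤ j' →
      j' ≤ n - 1 → (j, h) ≠ (j', h') → π j h ∘ₗ ι j' h' = 0)
    {j h : ℕ} (h1 : 1 ≤ h) (hhj : h ≤ j) (hj : j ≤ n - 1) {s : Finset ℕ}
    (hs : ∀ k ∈ s, 1 ≤ k ∧ k ≤ n - 1) (g : ∀ k, Dsp k) :
    π j h (∑ k ∈ s, ι k k (g k)) = if h = j ∧ j ∈ s then g j else 0 := by
  rw [map_sum]
  split_ifs with hc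
  · obtain ⟨rfl, hhs⟩ := hc
    refine (sum_eq_single_of_mem h hhs fun k hk hkh => ?_).trans
      (LinearMap.congr_fun (hπι h h h1 le_rfl hj) (g h))
    exact LinearMap.congr_fun (hπι0 h h k k h1 le_rfl hj (hs k hk).1 le_rfl (hs k hk).2
      (by simp [Ne.symm hkh])) (g k)
  · exact sum_eq_zero fun k hk => LinearMap.congr_fun (hπι0 j h k k h1 hhj hj (hs k hk).1
      le_rfl (hs k hk).2 (by rintro ⟨rfl, rfl⟩; exact hc ⟨rfl, hk⟩)) (g k)

theorem π_shift_apply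
    (hπι : ∀ j h, 1 ≤ h → h ≤ j → j ≤ n - 1 → π j h ∘ₗ ι j h = LinearMap.id)
    (hπι0 : ∀ j h j' h', 1 ≤ h → h ≤ j → j ≤ n - 1 → 1 ≤ h' → h' ≤ j' →
      j' ≤ n - 1 → (j, h) ≠ (j', h') → π j h ∘ₗ ι j' h' = 0)
    (hcomplete : ∑ j ∈ Icc 1 (n - 1), ∑ h ∈ Icc 1 j, ι j h ∘ₗ π j h = LinearMap.id)
    {x : Module.End ℂ D} (hx : ∀ j h, 1 ≤ h → h ≤ j → j ≤ n - 1 →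
      x ∘ₗ ι j h = if 2 ≤ h then ι j (h - 1) else 0)
    {j h : ℕ} (h1 : 1 ≤ h) (hhj : h ≤ j) (hj : j ≤ n - 1) (v : D) :
    π j h (x v) = if h + 1 ≤ j then π j (h + 1) v else 0 := by
  have hterm : ∀ j' ∈ Icc 1 (n - 1), ∀ h' ∈ Icc 1 j', π j h (x (ι j' h' (π j' h' v))) =
      if j' = j ∧ h' = h + 1 then π j (h + 1) v else 0 := by
    intro j' hj' h' hh'
    rw [mem_Icc] at hj' hh'
    rw [← LinearMap.comp_apply x, hx j' h' hh'.1 hh'.2 hj'.2]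
    split_ifs with h2 hc hc
    · obtain ⟨rfl, rfl⟩ := hc
      exact LinearMap.congr_fun (hπι j' h h1 hhj hj) _
    · exact LinearMap.congr_fun (hπι0 j h j' (h' - 1) h1 hhj hj (by omega) (by omega) hj'.2
        (by rintro ⟨rfl, rfl⟩; omega)) _
    · omega
    · simp
  rw [π_apply_eq_sum hcomplete, sum_congr rfl fun j' hj' => sum_congr rfl (hterm j' hj')]
  simp [ite_and, show 1 ≤ j by omega, hj]

theorem π_phiBlock_apply {V : ℕ → Type} [∀ i, AddCommGroup (V i)] [∀ i, Module ℂ (V i)]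
    {B : ∀ i, V i →ₗ[ℂ] V (i + 1)} {Bb : ∀ i, V (i + 1) →ₗ[ℂ] V i}
    {p : ∀ i, Dsp i →ₗ[ℂ] V i} {q : ∀ i, V i →ₗ[ℂ] Dsp i}
    (hπι : ∀ j h, 1 ≤ h → h ≤ j → j ≤ n - 1 → π j h ∘ₗ ι j h = LinearMap.id)
    (hπι0 : ∀ j h j' h', 1 ≤ h → h ≤ j → j ≤ n - 1 → 1 ≤ h' → h' ≤ j' →
      j' ≤ n - 1 → (j, h) ≠ (j', h') → π j h ∘ₗ ι j' h' = 0)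
    (hcomplete : ∑ j ∈ Icc 1 (n - 1), ∑ h ∈ Icc 1 j, ι j h ∘ₗ π j h = LinearMap.id)
    {f : Module.End ℂ D} (hf : ∀ j' h', 1 ≤ h' → h' ≤ j' → j' ≤ n - 1 →
      f ∘ₗ ι j' h' = ∑ j ∈ Icc h' (n - 1), ι j j ∘ₗ phiBlock B Bb p q h' j' j)
    {j h : ℕ} (h1 : 1 ≤ h) (hhj : h ≤ j) (hj : j ≤ n - 1) (v : D) :
    π j h (f v) = if h = j then
      ∑ j' ∈ Icc 1 (n - 1), ∑ h' ∈ Icc 1 j', phiBlock B Bb p q h' j' j (π j' h' v) else 0 := by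
  have hterm : ∀ j' ∈ Icc 1 (n - 1), ∀ h' ∈ Icc 1 j', π j h (f (ι j' h' (π j' h' v))) =
      if h = j then phiBlock B Bb p q h' j' j (π j' h' v) else 0 := by
    intro j' hj' h' hh'
    rw [mem_Icc] at hj' hh'
    rw [← LinearMap.comp_apply f, hf j' h' hh'.1 hh'.2 hj'.2, LinearMap.sum_apply]
    simp only [LinearMap.comp_apply]
    rw [π_sum_ι_diag hπι hπι0 h1 hhj hj (fun k hk => by simp only [mem_Icc] at hk; omega)]
    by_cases hjh' : h' ≤ j
    · simp [hjh', hj]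
    · simp [hjh', phiBlock_of_lt B Bb p q (not_le.mp hjh')]
  rw [π_apply_eq_sum hcomplete, sum_congr rfl fun j' hj' => sum_congr rfl (hterm j' hj')]
  split_ifs <;> simp

end Blocks

theorem stmt7_general (n : ℕ)
    (V Dsp : ℕ → Type)
    [∀ i, AddCommGroup (V i)] [∀ i, Module ℂ (V i)] [∀ i, FiniteDimensional ℂ (V i)]
    [∀ i, AddCommGroup (Dsp i)] [∀ i, Module ℂ (Dsp i)] [∀ i, FiniteDimensional ℂ (Dsp i)]
    (hV0 : finrank ℂ (V 0) = 0) (hVn : finrank ℂ (V n) = 0)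
    (B : ∀ i, V i →ₗ[ℂ] V (i + 1)) (Bb : ∀ i, V (i + 1) →ₗ[ℂ] V i)
    (p : ∀ i, Dsp i →ₗ[ℂ] V i) (q : ∀ i, V i →ₗ[ℂ] Dsp i)
    (hmoment : ∀ i, i + 1 ≤ n - 1 →
      B i ∘ₗ Bb i - Bb (i + 1) ∘ₗ B (i + 1) + p (i + 1) ∘ₗ q (i + 1) = 0)
    (D : Type) [AddCommGroup D] [Module ℂ D]
    (ι : ∀ _j _h : ℕ, Dsp _j →ₗ[ℂ] D) (π : ∀ _j _h : ℕ, D →ₗ[ℂ] Dsp _j)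
    (hπι : ∀ j h, 1 ≤ h → h ≤ j → j ≤ n - 1 → π j h ∘ₗ ι j h = LinearMap.id)
    (hπι0 : ∀ j h j' h', 1 ≤ h → h ≤ j → j ≤ n - 1 → 1 ≤ h' → h' ≤ j' →
      j' ≤ n - 1 → (j, h) ≠ (j', h') → π j h ∘ₗ ι j' h' = 0)
    (hcomplete : ∑ j ∈ Finset.Icc 1 (n - 1), ∑ h ∈ Finset.Icc 1 j,
      ι j h ∘ₗ π j h = LinearMap.id)
    (x f : Module.End ℂ D)
    (hx : ∀ j h, 1 ≤ h → h ≤ j → j ≤ n - 1 →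
      x ∘ₗ ι j h = if 2 ≤ h then ι j (h - 1) else 0)
    (hf : ∀ j' h', 1 ≤ h' → h' ≤ j' → j' ≤ n - 1 →
      f ∘ₗ ι j' h' = ∑ j ∈ Finset.Icc h' (n - 1), ι j j ∘ₗ phiBlock B Bb p q h' j' j) :
    IsNilpotent (x + f) := by
  have : FiniteDimensional ℂ D := Module.Finite.of_sum_comp_eq_id _
    (fun i : (_ : ℕ) × ℕ => ι i.1 i.2) (fun i => π i.1 i.2) (by rwa [sum_sigma])
  refine Module.End.isNilpotent_of_forall_hasEigenvalue_eq_zero _ fun μ hμ => ?_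
  by_contra hμ0
  obtain ⟨e, he, he0⟩ := hμ.exists_hasEigenvector
  have hblock (j h : ℕ) : μ • π j h e = π j h (x e) + π j h (f e) := by
    rw [← map_smul, ← Module.End.mem_eigenspace_iff.mp he, LinearMap.add_apply, map_add]
  refine he0 ((eq_sum_ι_π hcomplete e).trans
    (sum_eq_zero fun j hj => sum_eq_zero fun h hh => ?_))
  rw [mem_Icc] at hj hh
  rw [eq_zero_of_eigen_equations (w := fun j h => π j h e) (Module.finrank_zero_iff.mp hV0)
    (Module.finrank_zero_iff.mp hVn) hmoment hμ0 ?row ?diag hh.1 hh.2 hj.2, map_zero]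
  case row =>
    intro j h h1 hhj hj
    rw [hblock, π_shift_apply hπι hπι0 hcomplete hx h1 (by omega) hj,
      π_phiBlock_apply hπι hπι0 hcomplete hf h1 (by omega) hj, if_pos hhj, if_neg (by omega),
      add_zero]
  case diag =>
    intro j h1 hj
    rw [hblock, π_shift_apply hπι hπι0 hcomplete hx h1 le_rfl hj,
      π_phiBlock_apply hπι hπι0 hcomplete hf h1 le_rfl hj, if_neg (by omega), if_pos rfl,
      zero_add]

/-- Let `n ≥ 2`, `v, d ∈ ℤ_{≥0}^{n-1}`, and let
`(B, B̄, p, q)` be a point of `Λ(v,d)`: linear maps `B_i : V_i → V_{i+1}`,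
`B̄_i : V_{i+1} → V_i`, `p_i : D_i → V_i`, `q_i : V_i → D_i` between complex
vector spaces with `dim V_i = v_i`, `dim D_i = d_i`, `V_0 = V_n = 0`, with
`B_0, B̄_0, B_{n-1}, B̄_{n-1} = 0`, satisfying the moment map equations
`B_{i-1}B̄_{i-1} - B̄_iB_i + p_iq_i = 0` for `1 ≤ i ≤ n-1`.  Let
`D = ⊕_{1 ≤ h ≤ j ≤ n-1} D_j^h` (`D_j^h` a copy of `D_j`, realized by
injections `ι_j^h` and projections `π_j^h`), let `x ∈ End(D)` map `D_j^h`
identically onto `D_j^{h-1}` (killing each `D_j^1`), and let `f ∈ End(D)` have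
blocks `f^{j',h'}_{j,h} = q_j B_{j-1}⋯B_{h'} B̄_{h'}⋯B̄_{j'-1} p_{j'}` for
`h = j ≥ h'`, and `0` otherwise.  Then `x + f` is nilpotent. -/
theorem stmt7 (n : ℕ) (hn : 2 ≤ n) (v d : ℕ → ℕ)
    (V Dsp : ℕ → Type)
    [∀ i, AddCommGroup (V i)] [∀ i, Module ℂ (V i)] [∀ i, FiniteDimensional ℂ (V i)]
    [∀ i, AddCommGroup (Dsp i)] [∀ i, Module ℂ (Dsp i)] [∀ i, FiniteDimensional ℂ (Dsp i)]
    (hdimV : ∀ i, 1 ≤ i → i ≤ n - 1 → finrank ℂ (V i) = v i)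
    (hV0 : finrank ℂ (V 0) = 0) (hVn : finrank ℂ (V n) = 0)
    (hdimD : ∀ i, 1 ≤ i → i ≤ n - 1 → finrank ℂ (Dsp i) = d i)
    (B : ∀ i, V i →ₗ[ℂ] V (i + 1)) (Bb : ∀ i, V (i + 1) →ₗ[ℂ] V i)
    (p : ∀ i, Dsp i →ₗ[ℂ] V i) (q : ∀ i, V i →ₗ[ℂ] Dsp i)
    (hB : ∀ i, ¬(1 ≤ i ∧ i ≤ n - 2) → B i = 0)
    (hBb : ∀ i, ¬(1 ≤ i ∧ i ≤ n - 2) → Bb i = 0)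
    (hmoment : ∀ i, i + 1 ≤ n - 1 →
      B i ∘ₗ Bb i - Bb (i + 1) ∘ₗ B (i + 1) + p (i + 1) ∘ₗ q (i + 1) = 0)
    (D : Type) [AddCommGroup D] [Module ℂ D]
    (ι : ∀ _j _h : ℕ, Dsp _j →ₗ[ℂ] D) (π : ∀ _j _h : ℕ, D →ₗ[ℂ] Dsp _j)
    (hπι : ∀ j h, 1 ≤ h → h ≤ j → j ≤ n - 1 → π j h ∘ₗ ι j h = LinearMap.id)
    (hπι0 : ∀ j h j' h', 1 ≤ h → h ≤ j → j ≤ n - 1 → 1 ≤ h' → h' ≤ j' →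
      j' ≤ n - 1 → (j, h) ≠ (j', h') → π j h ∘ₗ ι j' h' = 0)
    (hcomplete : ∑ j ∈ Finset.Icc 1 (n - 1), ∑ h ∈ Finset.Icc 1 j,
      ι j h ∘ₗ π j h = LinearMap.id)
    (x f : Module.End ℂ D)
    (hx : ∀ j h, 1 ≤ h → h ≤ j → j ≤ n - 1 →
      x ∘ₗ ι j h = if 2 ≤ h then ι j (h - 1) else 0)
    (hf : ∀ j' h', 1 ≤ h' → h' ≤ j' → j' ≤ n - 1 →
      f ∘ₗ ι j' h' = ∑ j ∈ Finset.Icc h' (n - 1), ι j j ∘ₗ phiBlock B Bb p q h' j' j)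
    (hfker : ∀ g : D, (∀ j h, 1 ≤ h → h ≤ j → j ≤ n - 1 → π j h g = 0) → f g = 0) :
    IsNilpotent (x + f) :=
  stmt7_general n V Dsp hV0 hVn B Bb p q hmoment D ι π hπι hπι0 hcomplete x f hx hf
end
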